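/- Let a, b, c, d > 0 with a ≤ b and c ≤ d. The ratio (∫₀¹ a^s b^{1−s} dm(s)) / (∫₀¹ c^s d^{1−s} dm(s)) takes the same value for every even probability measure m on [0,1] if and only if a/c = b/d. -/
import Mathlib


open MeasureTheory

private lemma cont_aux {c d : ℝ} (hc : 0 < c) (hd : 0 < d) :
    Continuous fun s : ℝ => c ^ s * d ^ (1 - s) := by
  have h : (fun s : ℝ => c ^ s * d ^ (1 - s)) =
      fun s : ℝ => Real.exp (Real.log c * s) * Real.exp (Real.log d * (1 - s)) := by
    funext s
    rw [Real.rpow_def_of_pos hc, Real.rpow_def_of_pos hd]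
  rw [h]
  fun_prop

private lemma int_dirac_aux (f : ℝ → ℝ) (hf : Continuous f) (x : ℝ) :
    Integrable f (Measure.dirac x) := by
  refine ⟨hf.aestronglyMeasurable, ?_⟩
  simp [MeasureTheory.HasFiniteIntegral, MeasureTheory.lintegral_dirac]

private lemma integral_pos_aux {c d : ℝ} (hc : 0 < c) (hd : 0 < d) (m : Measure ℝ)
    (hP : IsProbabilityMeasure m) (hm : m (Set.Icc (0:ℝ) 1)ᶜ = 0) :
    0 < ∫ s, c ^ s * d ^ (1 - s) ∂m := by
  have hmin : 0 < min c d := lt_min hc hd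
  have hae : ∀ᵐ s ∂m, s ∈ Set.Icc (0:ℝ) 1 := by
    rw [MeasureTheory.ae_iff]
    exact hm
  have hbound : ∀ s ∈ Set.Icc (0:ℝ) 1,
      min c d ≤ c ^ s * d ^ (1 - s) ∧ c ^ s * d ^ (1 - s) ≤ max c d := by
    intro s hs
    obtain ⟨hs0, hs1⟩ := hs
    have h1s : (0:ℝ) ≤ 1 - s := by linarith
    constructor
    · have e1 : (min c d) ^ s ≤ c ^ s :=
        Real.rpow_le_rpow hmin.le (min_le_left c d) hs0
      have e2 : (min c d) ^ (1 - s) ≤ d ^ (1 - s) :=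
        Real.rpow_le_rpow hmin.le (min_le_right c d) h1s
      have e3 : (min c d) ^ s * (min c d) ^ (1 - s) ≤ c ^ s * d ^ (1 - s) :=
        mul_le_mul e1 e2 (Real.rpow_nonneg hmin.le _) (Real.rpow_nonneg hc.le _)
      calc min c d = (min c d) ^ (s + (1 - s)) := by norm_num
        _ = (min c d) ^ s * (min c d) ^ (1 - s) := Real.rpow_add hmin _ _
        _ ≤ _ := e3
    · have e1 : c ^ s ≤ (max c d) ^ s :=
        Real.rpow_le_rpow hc.le (le_max_left c d) hs0
      have e2 : d ^ (1 - s) ≤ (max c d) ^ (1 - s) :=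
        Real.rpow_le_rpow hd.le (le_max_right c d) h1s
      have e3 : c ^ s * d ^ (1 - s) ≤ (max c d) ^ s * (max c d) ^ (1 - s) :=
        mul_le_mul e1 e2 (Real.rpow_nonneg hd.le _)
          (Real.rpow_nonneg (le_trans hc.le (le_max_left c d)) _)
      calc c ^ s * d ^ (1 - s) ≤ (max c d) ^ s * (max c d) ^ (1 - s) := e3
        _ = (max c d) ^ (s + (1 - s)) :=
            (Real.rpow_add (lt_of_lt_of_le hc (le_max_left c d)) _ _).symm
        _ = max c d := by norm_num
  have hint : Integrable (fun s => c ^ s * d ^ (1 - s)) m := by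
    apply Integrable.mono' (integrable_const (max c d)) (cont_aux hc hd).aestronglyMeasurable
    filter_upwards [hae] with s hs
    rw [Real.norm_eq_abs, abs_of_nonneg (by positivity)]
    exact (hbound s hs).2
  have hle : min c d ≤ ∫ s, c ^ s * d ^ (1 - s) ∂m := by
    have := integral_mono_ae (integrable_const (min c d)) hint
      (by filter_upwards [hae] with s hs; exact (hbound s hs).1)
    simpa using this
  exact lt_of_lt_of_le hmin hle

/-- for `0 < a ≤ b` and `0 < c ≤ d`, the ratio
`(∫₀¹ a^s b^{1-s} dm)/(∫₀¹ c^s d^{1-s} dm)` is the same for every even probability measure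
`m` on `[0,1]` if and only if `a/c = b/d`. -/
theorem even_mean_ratio_constant_iff (a b c d : ℝ)
    (ha : 0 < a) (hb : 0 < b) (hc : 0 < c) (hd : 0 < d)
    (hab : a ≤ b) (hcd : c ≤ d) :
    (∃ r : ℝ, ∀ m : Measure ℝ, IsProbabilityMeasure m → m (Set.Icc (0:ℝ) 1)ᶜ = 0 →
        m.map (fun s => 1 - s) = m →
        (∫ s, a ^ s * b ^ (1 - s) ∂m) / (∫ s, c ^ s * d ^ (1 - s) ∂m) = r) ↔
      a / c = b / d := by
  constructor
  · rintro ⟨r, hr⟩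
    have hmeas : Measurable fun s : ℝ => 1 - s := by fun_prop
    -- measure 1 : dirac (1/2)
    have h1 := hr (Measure.dirac (1/2 : ℝ)) inferInstance
      (by
        rw [Measure.dirac_apply' _ measurableSet_Icc.compl]
        simp [Set.indicator_apply]
        norm_num)
      (by rw [Measure.map_dirac' hmeas]; norm_num)
    rw [integral_dirac, integral_dirac] at h1
    norm_num at h1
    -- measure 2 : (δ₀ + δ₁)/2
    set m2 : Measure ℝ := (2:ENNReal)⁻¹ • Measure.dirac 0 + (2:ENNReal)⁻¹ • Measure.dirac 1 with hm2
    have hP2 : IsProbabilityMeasure m2 := by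
      constructor
      simp [hm2]
      rw [ENNReal.inv_two_add_inv_two]
    have hcompl : m2 (Set.Icc (0:ℝ) 1)ᶜ = 0 := by
      simp [hm2, Measure.dirac_apply' _ measurableSet_Icc.compl, Set.indicator_apply]
    have hmap : m2.map (fun s => 1 - s) = m2 := by
      rw [hm2, Measure.map_add _ _ hmeas, Measure.map_smul, Measure.map_smul,
        Measure.map_dirac' hmeas, Measure.map_dirac' hmeas]
      norm_num
      rw [add_comm]
    have hintcalc : ∀ (x y : ℝ), 0 < x → 0 < y →
        (∫ s, x ^ s * y ^ (1 - s) ∂m2) = (y + x) / 2 := by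
      intro x y hx hy
      have hi0 := int_dirac_aux _ (cont_aux hx hy) 0
      have hi1 := int_dirac_aux _ (cont_aux hx hy) 1
      rw [hm2, integral_add_measure (hi0.smul_measure (by simp)) (hi1.smul_measure (by simp)),
        integral_smul_measure, integral_smul_measure, integral_dirac, integral_dirac]
      norm_num [Real.rpow_zero, Real.rpow_one]
      ring
    have h2 := hr m2 hP2 hcompl hmap
    rw [hintcalc a b ha hb, hintcalc c d hc hd] at h2
    -- now the algebra
    set p := a ^ ((1:ℝ)/2) with hp
    set q := b ^ ((1:ℝ)/2) with hq
    set u := c ^ ((1:ℝ)/2) with hu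
    set v := d ^ ((1:ℝ)/2) with hv
    have hp0 : 0 < p := Real.rpow_pos_of_pos ha _
    have hq0 : 0 < q := Real.rpow_pos_of_pos hb _
    have hu0 : 0 < u := Real.rpow_pos_of_pos hc _
    have hv0 : 0 < v := Real.rpow_pos_of_pos hd _
    have sq : ∀ x : ℝ, 0 ≤ x → (x ^ ((1:ℝ)/2)) ^ 2 = x := by
      intro x hx
      rw [← Real.rpow_natCast (x ^ ((1:ℝ)/2)) 2, ← Real.rpow_mul hx]
      norm_num
    have hp2 : p ^ 2 = a := sq a ha.le
    have hq2 : q ^ 2 = b := sq b hb.le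
    have hu2 : u ^ 2 = c := sq c hc.le
    have hv2 : v ^ 2 = d := sq d hd.le
    have hpq : p ≤ q := Real.rpow_le_rpow ha.le hab (by norm_num)
    have huv : u ≤ v := Real.rpow_le_rpow hc.le hcd (by norm_num)
    -- combine h1 h2
    have hE : p * q * (d + c) = (b + a) * (u * v) := by
      have h12 : (p * q) / (u * v) = ((b + a) / 2) / ((d + c) / 2) := by
        rw [h1, h2]
      rw [div_eq_div_iff (by positivity) (by positivity)] at h12
      linarith
    have key : (q * u - p * v) * (p * u - q * v) = 0 := by
      linear_combination hE + (p * q) * hu2 + (p * q) * hv2 - (u * v) * hp2 - (u * v) * hq2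
    rw [div_eq_div_iff hc.ne' hd.ne']
    rcases mul_eq_zero.mp key with hz | hz
    · have hpv : q * u = p * v := by linarith
      calc a * d = p ^ 2 * v ^ 2 := by rw [hp2, hv2]
        _ = (p * v) ^ 2 := by ring
        _ = (q * u) ^ 2 := by rw [hpv]
        _ = q ^ 2 * u ^ 2 := by ring
        _ = b * c := by rw [hq2, hu2]
    · have hsum : q * (v - u) + u * (q - p) = 0 := by linear_combination -hz
      have t1 : 0 ≤ q * (v - u) := mul_nonneg hq0.le (by linarith)
      have t2 : 0 ≤ u * (q - p) := mul_nonneg hu0.le (by linarith)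
      have e1 : q * (v - u) = 0 := by linarith
      have e2 : u * (q - p) = 0 := by linarith
      have hvu : v = u := by
        rcases mul_eq_zero.mp e1 with h' | h'
        · exact absurd h' hq0.ne'
        · linarith
      have hqp : q = p := by
        rcases mul_eq_zero.mp e2 with h' | h'
        · exact absurd h' hu0.ne'
        · linarith
      calc a * d = p ^ 2 * v ^ 2 := by rw [hp2, hv2]
        _ = q ^ 2 * u ^ 2 := by rw [hvu, hqp]
        _ = b * c := by rw [hq2, hu2]
  · intro h
    refine ⟨a / c, fun m hP hcompl _ => ?_⟩
    have hac : 0 < a / c := by positivity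
    have hbd : b = (a / c) * d := by
      rw [div_eq_div_iff hc.ne' hd.ne'] at h
      field_simp
      linarith
    have hacc : a = (a / c) * c := by field_simp
    have key : ∀ s : ℝ, a ^ s * b ^ (1 - s) = (a / c) * (c ^ s * d ^ (1 - s)) := by
      intro s
      rw [hbd]
      nth_rewrite 1 [hacc]
      rw [Real.mul_rpow hac.le hc.le, Real.mul_rpow hac.le hd.le]
      rw [show (a/c)^s * c^s * ((a/c)^(1-s) * d^(1-s)) =
        ((a/c)^s * (a/c)^(1-s)) * (c^s * d^(1-s)) by ring, ← Real.rpow_add hac]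
      norm_num
    have hI : 0 < ∫ s, c ^ s * d ^ (1 - s) ∂m := integral_pos_aux hc hd m hP hcompl
    simp_rw [key]
    rw [integral_const_mul, mul_div_assoc, div_self hI.ne', mul_one]
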